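/- arXiv:0901.3117 — 6 statements merged into one kernel-verified Lean document; each statement's English description precedes it below -/
import Mathlib

section
/- Let F be a nonempty compact convex subset of ℝⁿ. Then the set of vectors c ∈ ℝⁿ for which the linear functional x ↦ ⟨c, x⟩ has a unique maximizer over F is a residual (comeagre) subset of ℝⁿ. -/
/-!
If `x` maximizes `⟪c + t • v, ·⟫` and `y` maximizes `⟪c + s • v, ·⟫` on `F` with `t < s`, then
`⟪v, x⟫ ≤ ⟪v, y⟫`. Hence, if every `c'` in a ball had two maximizers at distance `≥ ε` in
direction `v`, moving `c'` along `v` inside the ball would push `⟪v, ·⟫` up by `ε` infinitely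
often, impossible on a bounded `F`. So the set of such `c` is closed (by compactness of `F`)
with dense complement, and a point outside all of them, for `v` running through a countable
dense set and `ε = 1 / (m + 1)`, has a unique maximizer.
-/

open Filter

section

variable {E : Type*} [NormedAddCommGroup E] [InnerProductSpace ℝ E]

open scoped RealInnerProductSpace

def spreadSet (F : Set E) (v : E) (ε : ℝ) : Set E :=
  {c | ∃ x ∈ F, ∃ y ∈ F, IsMaxOn (inner ℝ c) F x ∧ IsMaxOn (inner ℝ c) F y ∧ ε ≤ ⟪v, x - y⟫}

theorem inner_le_of_isMaxOn_add_smul {F : Set E} {c v x y : E} {t s : ℝ} (hts : t < s)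
    (hxF : x ∈ F) (hyF : y ∈ F) (hx : IsMaxOn (inner ℝ (c + t • v)) F x)
    (hy : IsMaxOn (inner ℝ (c + s • v)) F y) : ⟪v, x⟫ ≤ ⟪v, y⟫ := by
  have hyx : ⟪c + t • v, y⟫ ≤ ⟪c + t • v, x⟫ := hx hyF
  have hxy : ⟪c + s • v, x⟫ ≤ ⟪c + s • v, y⟫ := hy hxF
  simp only [inner_add_left, real_inner_smul_left] at hyx hxy
  nlinarith

theorem isClosed_setOf_isMaxOn_inner (F : Set E) :
    IsClosed {p : E × E | IsMaxOn (inner ℝ p.1) F p.2} := by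
  simp only [isMaxOn_iff, Set.ofPred_forall]
  exact isClosed_biInter fun z _ => isClosed_le (by fun_prop) (by fun_prop)

theorem isClosed_spreadSet {F : Set E} (hF : IsCompact F) (v : E) (ε : ℝ) :
    IsClosed (spreadSet F v ε) := by
  have : CompactSpace (F × F) := by
    have := isCompact_iff_compactSpace.1 hF
    infer_instance
  have hS : IsClosed {p : E × (F × F) | IsMaxOn (inner ℝ p.1) F p.2.1 ∧
      IsMaxOn (inner ℝ p.1) F p.2.2 ∧ ε ≤ ⟪v, (p.2.1 : E) - p.2.2⟫} := by
    have hM := isClosed_setOf_isMaxOn_inner F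
    exact (hM.preimage (f := fun p : E × (F × F) => (p.1, (p.2.1 : E))) (by fun_prop)).inter
      ((hM.preimage (f := fun p : E × (F × F) => (p.1, (p.2.2 : E))) (by fun_prop)).inter
        (isClosed_le continuous_const
          (g := fun p : E × (F × F) => ⟪v, (p.2.1 : E) - p.2.2⟫) (by fun_prop)))
  convert isClosedMap_fst_of_compactSpace _ hS using 1
  ext c
  simp [spreadSet, and_left_comm]

theorem monotone_inner_sub_mul_of_isMaxOn {F : Set E} {c v : E} {ε : ℝ} {t : ℕ → ℝ}
    (ht : StrictMono t) {x y : ℕ → E} (hxF : ∀ k, x k ∈ F) (hyF : ∀ k, y k ∈ F)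
    (hx : ∀ k, IsMaxOn (inner ℝ (c + t k • v)) F (x k))
    (hy : ∀ k, IsMaxOn (inner ℝ (c + t k • v)) F (y k)) (hxy : ∀ k, ε ≤ ⟪v, x k - y k⟫) :
    Monotone fun k : ℕ => ⟪v, x k⟫ - k * ε := by
  refine monotone_nat_of_le_succ fun k => ?_
  have hstep := inner_le_of_isMaxOn_add_smul (ht k.lt_succ_self) (hxF k) (hyF (k + 1)) (hx k)
    (hy (k + 1))
  have hgap := hxy (k + 1)
  rw [inner_sub_right] at hgap
  push_cast
  linarith

theorem not_forall_add_smul_mem_spreadSet {F : Set E} (hF : Bornology.IsBounded F)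
    {c v : E} {ε : ℝ} (hε : 0 < ε) {t : ℕ → ℝ} (ht : StrictMono t) :
    ¬ ∀ k, c + t k • v ∈ spreadSet F v ε := by
  intro hmem
  choose x hxF y hyF hx hy hxy using hmem
  have hmono := monotone_inner_sub_mul_of_isMaxOn ht hxF hyF hx hy hxy
  obtain ⟨R, hR⟩ := hF.exists_norm_le
  have hbound : ∀ z ∈ F, |⟪v, z⟫| ≤ ‖v‖ * R := fun z hz =>
    (abs_real_inner_le_norm v z).trans (mul_le_mul_of_nonneg_left (hR z hz) (norm_nonneg v))
  obtain ⟨k, hk⟩ := exists_nat_gt (2 * (‖v‖ * R) / ε)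
  rw [div_lt_iff₀ hε] at hk
  have h0 := abs_le.1 (hbound _ (hxF 0))
  have hk' := abs_le.1 (hbound _ (hxF k))
  have := hmono (Nat.zero_le k)
  simp only [CharP.cast_eq_zero, zero_mul, sub_zero] at this
  linarith

theorem dense_compl_spreadSet {F : Set E} (hF : Bornology.IsBounded F) (v : E) {ε : ℝ}
    (hε : 0 < ε) : Dense (spreadSet F v ε)ᶜ := by
  refine Metric.dense_iff.2 fun c δ hδ => Set.inter_compl_nonempty_iff.2 fun hball => ?_
  set r := δ / (‖v‖ + 1) with hr
  have hr₀ : 0 < r := by positivity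
  have hrv : r * ‖v‖ < δ := by
    rw [hr, div_mul_eq_mul_div, div_lt_iff₀ (by positivity)]
    nlinarith [norm_nonneg v]
  refine not_forall_add_smul_mem_spreadSet hF hε (c := c) (t := fun k => -(r * (1 / 2) ^ k))
    (fun a b hab => ?_) fun k => hball ?_
  · exact neg_lt_neg (mul_lt_mul_of_pos_left
      (pow_right_strictAnti₀ (by norm_num : (0 : ℝ) < 1 / 2) (by norm_num) hab) hr₀)
  · rw [Metric.mem_ball, dist_eq_norm, add_sub_cancel_left, norm_smul, norm_neg,
      Real.norm_of_nonneg (by positivity)]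
    calc r * (1 / 2) ^ k * ‖v‖ ≤ r * ‖v‖ := by
          gcongr
          exact mul_le_of_le_one_right hr₀.le (pow_le_one₀ (by norm_num) (by norm_num))
      _ < δ := hrv

theorem eq_of_isMaxOn_inner_of_forall_notMem_spreadSet {F : Set E} {w : ℕ → E}
    (hw : DenseRange w) {c x y : E} (hc : ∀ k m : ℕ, c ∉ spreadSet F (w k) (1 / (m + 1)))
    (hxF : x ∈ F) (hyF : y ∈ F) (hx : IsMaxOn (inner ℝ c) F x) (hy : IsMaxOn (inner ℝ c) F y) :
    x = y := by
  by_contra hxy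
  have hpos : 0 < ⟪x - y, x - y⟫ := real_inner_self_pos.2 (sub_ne_zero.2 hxy)
  have hU : IsOpen {v : E | 0 < ⟪v, x - y⟫} := isOpen_lt continuous_const (by fun_prop)
  obtain ⟨k, hk : 0 < ⟪w k, x - y⟫⟩ := hw.exists_mem_open hU ⟨x - y, hpos⟩
  obtain ⟨m, hm⟩ := exists_nat_one_div_lt hk
  exact hc k m ⟨x, hxF, y, hyF, hx, hy, hm.le⟩

theorem residual_setOf_existsUnique_isMaxOn_inner [TopologicalSpace.SeparableSpace E]
    {F : Set E} (hne : F.Nonempty) (hF : IsCompact F) :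
    {c | ∃! x, x ∈ F ∧ IsMaxOn (inner ℝ c) F x} ∈ residual E := by
  have hgood : ∀ p : ℕ × ℕ,
      (spreadSet F (TopologicalSpace.denseSeq E p.1) (1 / (p.2 + 1)))ᶜ ∈ residual E := fun p =>
    residual_of_dense_open (isClosed_spreadSet hF _ _).isOpen_compl
      (dense_compl_spreadSet hF.isBounded _ (by positivity))
  refine mem_of_superset (countable_iInter_mem.2 hgood) fun c hc => ?_
  simp only [Set.mem_iInter, Set.mem_compl_iff, Prod.forall] at hc
  obtain ⟨x, hxF, hx⟩ :=
    hF.exists_isMaxOn hne (by fun_prop : Continuous (inner ℝ c : E → ℝ)).continuousOn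
  exact ⟨x, ⟨hxF, hx⟩, fun y ⟨hyF, hy⟩ =>
    eq_of_isMaxOn_inner_of_forall_notMem_spreadSet (TopologicalSpace.denseRange_denseSeq E) hc
      hyF hxF hy hx⟩

end

theorem generic_unique_maximizer_residual_general (n : ℕ)
    (F : Set (EuclideanSpace ℝ (Fin n)))
    (hne : F.Nonempty) (hcomp : IsCompact F) :
    {c : EuclideanSpace ℝ (Fin n) |
      ∃! x, x ∈ F ∧ ∀ y ∈ F, (inner ℝ c y : ℝ) ≤ inner ℝ c x}
      ∈ residual (EuclideanSpace ℝ (Fin n)) :=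
  residual_setOf_existsUnique_isMaxOn_inner hne hcomp

/-- Generic uniqueness: for a nonempty compact convex set `F ⊆ ℝⁿ`, the set of
vectors `c` whose linear functional `x ↦ ⟪c, x⟫` has a unique maximizer over `F`
is residual (comeagre) in `ℝⁿ`. -/
theorem generic_unique_maximizer_residual (n : ℕ)
    (F : Set (EuclideanSpace ℝ (Fin n)))
    (hne : F.Nonempty) (hcomp : IsCompact F) (hconv : Convex ℝ F) :
    {c : EuclideanSpace ℝ (Fin n) |
      ∃! x, x ∈ F ∧ ∀ y ∈ F, (inner ℝ c y : ℝ) ≤ inner ℝ c x}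
      ∈ residual (EuclideanSpace ℝ (Fin n)) :=
  generic_unique_maximizer_residual_general n F hne hcomp
end

section
/- Let F be a nonempty compact convex subset of ℝⁿ. Then the set of vectors c ∈ ℝⁿ for which the linear functional x ↦ ⟨c, x⟩ has a unique maximizer over F has full Lebesgue measure in ℝⁿ (its complement is Lebesgue null). -/
/-!
The support function `h c = max_{x ∈ F} ⟪c, x⟫` of a compact set is Lipschitz, hence
differentiable almost everywhere by Rademacher's theorem. If `x` maximizes `⟪c, ·⟫` on `F`,
then `d ↦ h d - ⟪d, x⟫` is nonnegative and vanishes at `c`, so wherever `h` is differentiable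
its gradient at `c` is `x`; thus the maximizer is unique at every point of differentiability.
-/

open MeasureTheory

variable {E : Type*} [NormedAddCommGroup E] [InnerProductSpace ℝ E]

noncomputable def supportFunction (F : Set E) (c : E) : ℝ :=
  sSup (inner ℝ c '' F)

theorem IsMaxOn.supportFunction_eq_inner {F : Set E} {c x : E} (hmax : IsMaxOn (inner ℝ c) F x)
    (hx : x ∈ F) : supportFunction F c = inner ℝ c x :=
  IsGreatest.csSup_eq ⟨Set.mem_image_of_mem _ hx, by rintro - ⟨y, hy, rfl⟩; exact hmax hy⟩

namespace IsCompact

variable {F : Set E}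

theorem exists_isMaxOn_inner (hF : IsCompact F) (hne : F.Nonempty) (c : E) :
    ∃ x ∈ F, IsMaxOn (inner ℝ c) F x :=
  hF.exists_isMaxOn hne (continuous_const.inner continuous_id).continuousOn

theorem inner_le_supportFunction (hF : IsCompact F) {x : E} (hx : x ∈ F) (c : E) :
    inner ℝ c x ≤ supportFunction F c :=
  le_csSup (hF.bddAbove_image (continuous_const.inner continuous_id).continuousOn)
    (Set.mem_image_of_mem _ hx)

theorem lipschitzWith_supportFunction (hF : IsCompact F) (hne : F.Nonempty) {R : ℝ}
    (hR : ∀ x ∈ F, ‖x‖ ≤ R) : LipschitzWith (Real.toNNReal R) (supportFunction F) := by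
  refine LipschitzWith.of_le_add_mul' R fun c c' => ?_
  obtain ⟨x, hx, hmax⟩ := hF.exists_isMaxOn_inner hne c
  calc supportFunction F c = inner ℝ c' x + inner ℝ (c - c') x := by
        rw [hmax.supportFunction_eq_inner hx, inner_sub_left]; ring
    _ ≤ supportFunction F c' + ‖c - c'‖ * R := by
        gcongr
        · exact hF.inner_le_supportFunction hx c'
        · exact (real_inner_le_norm _ _).trans (by gcongr; exact hR x hx)
    _ = supportFunction F c' + R * dist c c' := by rw [dist_eq_norm, mul_comm]

theorem eq_innerSL_of_hasFDerivAt_supportFunction (hF : IsCompact F) {c x : E}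
    {φ : E →L[ℝ] ℝ} (hφ : HasFDerivAt (supportFunction F) φ c) (hx : x ∈ F)
    (hmax : IsMaxOn (inner ℝ c) F x) : φ = innerSL ℝ x := by
  have hmin : IsLocalMin (fun d => supportFunction F d - innerSL ℝ x d) c := by
    refine Filter.Eventually.of_forall fun d => ?_
    have hd : inner ℝ x d ≤ supportFunction F d :=
      real_inner_comm x d ▸ hF.inner_le_supportFunction hx d
    simp only [innerSL_apply_apply, hmax.supportFunction_eq_inner hx,
      real_inner_comm x c, sub_self, sub_nonneg, hd]
  exact sub_eq_zero.mp (hmin.hasFDerivAt_eq_zero (hφ.sub (innerSL ℝ x).hasFDerivAt))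

theorem existsUnique_isMaxOn_of_differentiableAt (hF : IsCompact F) (hne : F.Nonempty) {c : E}
    (hc : DifferentiableAt ℝ (supportFunction F) c) :
    ∃! x, x ∈ F ∧ ∀ y ∈ F, inner ℝ c y ≤ inner ℝ c x := by
  obtain ⟨x, hx, hmax⟩ := hF.exists_isMaxOn_inner hne c
  refine ⟨x, ⟨hx, hmax⟩, ?_⟩
  rintro z ⟨hz, hzmax⟩
  refine (innerSL_inj (𝕜 := ℝ)).mp ?_
  exact (hF.eq_innerSL_of_hasFDerivAt_supportFunction hc.hasFDerivAt hz hzmax).symm.trans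
    (hF.eq_innerSL_of_hasFDerivAt_supportFunction hc.hasFDerivAt hx hmax)

theorem ae_existsUnique_isMaxOn_inner [FiniteDimensional ℝ E] [MeasurableSpace E]
    [BorelSpace E] (μ : Measure E) [μ.IsAddHaarMeasure] (hF : IsCompact F) (hne : F.Nonempty) :
    ∀ᵐ c ∂μ, ∃! x, x ∈ F ∧ ∀ y ∈ F, inner ℝ c y ≤ inner ℝ c x := by
  obtain ⟨R, hR⟩ := isBounded_iff_forall_norm_le.mp hF.isBounded
  filter_upwards [(hF.lipschitzWith_supportFunction hne hR).ae_differentiableAt] with c hc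
  exact hF.existsUnique_isMaxOn_of_differentiableAt hne hc

end IsCompact

theorem unique_maximizer_full_measure_general (n : ℕ)
    (F : Set (EuclideanSpace ℝ (Fin n)))
    (hne : F.Nonempty) (hcomp : IsCompact F) :
    volume {c : EuclideanSpace ℝ (Fin n) |
      ∃! x, x ∈ F ∧ ∀ y ∈ F, (inner ℝ c y : ℝ) ≤ inner ℝ c x}ᶜ = 0 :=
  ae_iff.mp (hcomp.ae_existsUnique_isMaxOn_inner volume hne)

/-- For a nonempty compact convex set `F ⊆ ℝⁿ`, the set of vectors `c` whose linear
functional `x ↦ ⟪c, x⟫` has a unique maximizer over `F` has full Lebesgue measure: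
its complement is Lebesgue null. -/
theorem unique_maximizer_full_measure (n : ℕ)
    (F : Set (EuclideanSpace ℝ (Fin n)))
    (hne : F.Nonempty) (hcomp : IsCompact F) (hconv : Convex ℝ F) :
    volume {c : EuclideanSpace ℝ (Fin n) |
      ∃! x, x ∈ F ∧ ∀ y ∈ F, (inner ℝ c y : ℝ) ≤ inner ℝ c x}ᶜ = 0 :=
  unique_maximizer_full_measure_general n F hne hcomp
end

section
/- Let F be a nonempty compact convex subset of ℝⁿ. Then there is a subset A ⊆ ℝⁿ whose complement is Lebesgue null such that for every c ∈ A there exist a point x_c ∈ F and a constant δ_c > 0 with ⟨c, x_c⟩ ≥ ⟨c, x⟩ + δ_c ‖x − x_c‖² for all x ∈ F; that is, x_c is a strong (hence unique) maximizer of ⟨c,·⟩ over F. -/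
/-!
Let `π` be the metric projection onto `F` and `Q = id - π`. If `y` maximizes `⟪c, ·⟫` on `F`
then `π (c + y) = y`, so `Q (c + y) = c`: every `c` is a value of the Lipschitz map `Q`. By
Rademacher's theorem and Sard's lemma, the values of `Q` at points where `Q` has no invertible
derivative form a null set. At a point `v₀` where `Q` has an invertible derivative, the closed
convex hull of `Q '' closedBall v₀ ρ` contains a ball of radius `a * ρ` about `c = Q v₀`, while
every `Q v` lies in the half-space `⟪·, x - π v₀⟫ ≤ ‖v - v₀‖² / 4` for each `x ∈ F`. Hence
`⟪c + w, x - y⟫ ≤ ‖w‖² / (4 a²)`, and `w = t (x - y)` with small `t` gives strong maximality.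
-/

open MeasureTheory Set Metric
open scoped RealInnerProductSpace

section NormedSpace

variable {E G : Type*} [NormedAddCommGroup E] [NormedSpace ℝ E]
  [NormedAddCommGroup G] [NormedSpace ℝ G]

theorem ContinuousLinearMap.exists_norm_le_one_lt_apply (ℓ : StrongDual ℝ G) {r : ℝ}
    (hr : r < ‖ℓ‖) : ∃ z : G, ‖z‖ ≤ 1 ∧ r < ℓ z := by
  obtain ⟨z, hz, hrz⟩ := ℓ.exists_lt_apply_of_lt_opNorm hr
  rcases lt_abs.mp (Real.norm_eq_abs _ ▸ hrz) with h | h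
  · exact ⟨z, hz.le, h⟩
  · exact ⟨-z, by simpa using hz.le, by simpa using h⟩

theorem HasFDerivAt.exists_closedBall_subset_closure_convexHull_image {f : E → G}
    {A : E ≃L[ℝ] G} {x : E} (hf : HasFDerivAt f (A : E →L[ℝ] G) x) :
    ∃ a > 0, ∃ ε > 0, ∀ ρ, 0 < ρ → ρ < ε →
      closedBall (f x) (a * ρ) ⊆ closure (convexHull ℝ (f '' closedBall x ρ)) := by
  set M := ‖(A.symm : G →L[ℝ] E)‖ + 1
  have hM : 0 < M := by positivity
  have ha : 0 < 1 / (4 * M) := by positivity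
  obtain ⟨ε, hε, happrox⟩ := Metric.eventually_nhds_iff.mp (hf.isLittleO.def ha)
  refine ⟨1 / (4 * M), ha, ε, hε, fun ρ hρ hρε p hp => by_contra fun hpK => ?_⟩
  obtain ⟨ℓ, u, hℓK, hℓp⟩ := geometric_hahn_banach_closed_point
    (convex_convexHull ℝ _).closure isClosed_closure hpK
  have hℓ : 0 < ‖ℓ‖ := by
    refine norm_pos_iff.mpr fun hℓ0 => ?_
    have := hℓK (f x) (subset_closure (subset_convexHull ℝ _
      (mem_image_of_mem f (mem_closedBall_self hρ.le))))
    simp only [hℓ0, zero_apply] at this hℓp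
    linarith
  -- `ℓ (A z) > ‖ℓ‖ ρ / (2 M)` beats the linearization error plus `ℓ (p - f x)`, which are each
  -- at most `‖ℓ‖ ρ / (4 M)`, so `ℓ (f (x + z)) > ℓ p`.
  obtain ⟨z₁, hz₁, hℓz₁⟩ := ℓ.exists_norm_le_one_lt_apply (half_lt_self hℓ)
  set z := (ρ / M) • A.symm z₁
  have hz : ‖z‖ ≤ ρ := by
    have : ‖A.symm z₁‖ ≤ M := by
      calc ‖A.symm z₁‖ ≤ ‖(A.symm : G →L[ℝ] E)‖ * ‖z₁‖ := (A.symm : G →L[ℝ] E).le_opNorm z₁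
        _ ≤ M := by nlinarith [norm_nonneg (A.symm : G →L[ℝ] E)]
    calc ‖z‖ = ρ / M * ‖A.symm z₁‖ := by rw [norm_smul, Real.norm_of_nonneg (by positivity)]
      _ ≤ ρ / M * M := by gcongr
      _ = ρ := by field_simp
  have hfz : ℓ (f (x + z)) < ℓ p := by
    refine (hℓK _ (subset_closure (subset_convexHull ℝ _ (mem_image_of_mem f ?_)))).trans hℓp
    simpa [mem_closedBall, dist_eq_norm] using hz
  have herr : ‖f (x + z) - f x - A z‖ ≤ 1 / (4 * M) * ρ := by
    have := happrox (y := x + z) (by simpa [dist_eq_norm] using hz.trans_lt hρε)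
    rw [add_sub_cancel_left] at this
    exact this.trans (by gcongr)
  have hℓerr := (ℓ.le_opNorm _).trans (mul_le_mul_of_nonneg_left herr (norm_nonneg ℓ))
  have hℓp' := (ℓ.le_opNorm (p - f x)).trans
    (mul_le_mul_of_nonneg_left (mem_closedBall_iff_norm.mp hp) (norm_nonneg ℓ))
  have hAz : ℓ (A z) = ρ / M * ℓ z₁ := by simp [z]
  have hgrowth : ρ / M * (‖ℓ‖ / 2) < ρ / M * ℓ z₁ := by gcongr
  have e : ρ / M * (‖ℓ‖ / 2) = 2 * (‖ℓ‖ * (1 / (4 * M) * ρ)) := by field_simp; ring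
  rw [map_sub, map_sub, Real.norm_eq_abs, abs_le] at hℓerr
  rw [map_sub, Real.norm_eq_abs, abs_le] at hℓp'
  linarith [hℓerr.1, hℓp'.2]

end NormedSpace

section InnerProductSpace

variable {E : Type*} [NormedAddCommGroup E] [InnerProductSpace ℝ E] {F : Set E}

def IsStrongMaximizer (F : Set E) (c y : E) : Prop :=
  ∃ δ > 0, ∀ x ∈ F, ⟪c, x⟫ + δ * ‖x - y‖ ^ 2 ≤ ⟪c, y⟫

theorem sq_norm_sub_le_inner_of_inner_le_zero {u u' v v' : E} (hv : v ∈ F) (hv' : v' ∈ F)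
    (h : ∀ x ∈ F, ⟪u - v, x - v⟫ ≤ 0) (h' : ∀ x ∈ F, ⟪u' - v', x - v'⟫ ≤ 0) :
    ‖v - v'‖ ^ 2 ≤ ⟪u - u', v - v'⟫ := by
  have h₁ := h v' hv'
  have h₂ := h' v hv
  rw [← neg_sub v v', inner_neg_right] at h₁
  rw [← real_inner_self_eq_norm_sq, show u - u' = (u - v) - (u' - v') + (v - v') by abel,
    inner_add_left, inner_sub_left (u - v) (u' - v')]
  linarith

theorem lipschitzWith_one_of_inner_le_zero {π : E → E} (hπF : ∀ u, π u ∈ F)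
    (hπ : ∀ u, ∀ x ∈ F, ⟪u - π u, x - π u⟫ ≤ 0) : LipschitzWith 1 π := by
  refine LipschitzWith.of_dist_le_mul fun u u' => ?_
  rw [NNReal.coe_one, one_mul, dist_eq_norm, dist_eq_norm]
  have := (sq_norm_sub_le_inner_of_inner_le_zero (hπF u) (hπF u') (hπ u) (hπ u')).trans
    (real_inner_le_norm _ _)
  nlinarith [norm_nonneg (π u - π u'), norm_nonneg (u - u')]

theorem apply_add_eq_of_inner_sub_le_zero {π : E → E} (hπF : ∀ u, π u ∈ F)
    (hπ : ∀ u, ∀ x ∈ F, ⟪u - π u, x - π u⟫ ≤ 0) {c y : E} (hy : y ∈ F)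
    (hc : ∀ x ∈ F, ⟪c, x - y⟫ ≤ 0) : π (c + y) = y := by
  have h := sq_norm_sub_le_inner_of_inner_le_zero (u' := c + y) (hπF (c + y)) hy
    (hπ (c + y)) (by simpa using hc)
  rw [sub_self, inner_zero_left] at h
  simpa [sub_eq_zero] using h

theorem inner_sub_apply_le_sq_norm_sub_div_four {π : E → E} (hπF : ∀ u, π u ∈ F)
    (hπ : ∀ u, ∀ x ∈ F, ⟪u - π u, x - π u⟫ ≤ 0) (v v₀ : E) {x : E} (hx : x ∈ F) :
    ⟪v - π v, x - π v₀⟫ ≤ ‖v - v₀‖ ^ 2 / 4 := by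
  set a := (v - π v) - (v₀ - π v₀)
  set b := π v - π v₀
  have h₁ := hπ v x hx
  have h₂ := hπ v₀ (π v) (hπF v)
  have hab : ⟪a, b⟫ ≤ ‖a + b‖ ^ 2 / 4 := by
    nlinarith [norm_add_sq_real a b, norm_sub_sq_real a b, sq_nonneg ‖a - b‖]
  have e : a + b = v - v₀ := by simp only [a, b]; abel
  calc ⟪v - π v, x - π v₀⟫ = ⟪v - π v, x - π v⟫ + ⟪a, b⟫ + ⟪v₀ - π v₀, b⟫ := by
        simp only [a, b, inner_sub_left, inner_sub_right]; ring
    _ ≤ ‖v - v₀‖ ^ 2 / 4 := by rw [← e]; linarith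

theorem isStrongMaximizer_of_inner_add_le (hF : Bornology.IsBounded F) {c y : E} {a ε C : ℝ}
    (ha : 0 < a) (hε : 0 < ε) (hC : 0 < C)
    (h : ∀ ρ, 0 < ρ → ρ < ε → ∀ w, ‖w‖ ≤ a * ρ → ∀ x ∈ F, ⟪c + w, x - y⟫ ≤ C * ρ ^ 2) :
    IsStrongMaximizer F c y := by
  obtain ⟨R, hR, hFR⟩ := hF.exists_pos_norm_le
  set D := R + ‖y‖
  have hD : 0 < D := by positivity
  have hxyD : ∀ x ∈ F, ‖x - y‖ ≤ D := fun x hx =>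
    (norm_sub_le x y).trans (add_le_add_left (hFR x hx) _)
  set t := min (a / (2 * C)) (ε / (2 * D))
  have ht : 0 < t := by positivity
  have hCt : C * t ≤ a / 2 := by
    have := min_le_left (a / (2 * C)) (ε / (2 * D))
    rw [le_div_iff₀ (by positivity)] at this
    linarith
  refine ⟨a * t / 2, by positivity, fun x hx => ?_⟩
  rcases eq_or_ne x y with rfl | hxy
  · simp
  have hxy' : 0 < ‖x - y‖ := norm_pos_iff.mpr (sub_ne_zero.mpr hxy)
  have hρε : t * ‖x - y‖ < ε := calc
    t * ‖x - y‖ ≤ ε / (2 * D) * D := by gcongr; exacts [min_le_right _ _, hxyD x hx]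
    _ < ε := by field_simp; linarith
  have hw : ‖(a * t) • (x - y)‖ ≤ a * (t * ‖x - y‖) := by
    rw [norm_smul, Real.norm_of_nonneg (by positivity), mul_assoc]
  have key := h _ (by positivity) hρε _ hw x hx
  rw [inner_add_left, real_inner_smul_left, real_inner_self_eq_norm_sq, inner_sub_right] at key
  have : C * t * t ≤ a / 2 * t := by gcongr
  nlinarith [sq_nonneg ‖x - y‖]

theorem isStrongMaximizer_of_hasFDerivAt_sub {π : E → E} (hF : Bornology.IsBounded F)
    (hπF : ∀ u, π u ∈ F) (hπ : ∀ u, ∀ x ∈ F, ⟪u - π u, x - π u⟫ ≤ 0) {v₀ : E}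
    {A : E ≃L[ℝ] E} (hA : HasFDerivAt (fun v => v - π v) (A : E →L[ℝ] E) v₀) :
    IsStrongMaximizer F (v₀ - π v₀) (π v₀) := by
  obtain ⟨a, ha, ε, hε, hball⟩ := hA.exists_closedBall_subset_closure_convexHull_image
  refine isStrongMaximizer_of_inner_add_le hF ha hε (by norm_num : (0 : ℝ) < 1 / 4)
    fun ρ hρ hρε w hw x hx => ?_
  have hmem := hball ρ hρ hρε (show v₀ - π v₀ + w ∈ closedBall (v₀ - π v₀) (a * ρ) by
    simpa [mem_closedBall, dist_eq_norm] using hw)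
  set ℓ := innerSL ℝ (x - π v₀)
  suffices hhalf : closure (convexHull ℝ ((fun v => v - π v) '' closedBall v₀ ρ)) ⊆
      {q | ℓ q ≤ 1 / 4 * ρ ^ 2} from
    (real_inner_comm _ _).trans_le (hhalf hmem)
  refine closure_minimal (convexHull_min ?_ (convex_halfSpace_le ℓ.toLinearMap.isLinear _))
    (isClosed_le ℓ.continuous continuous_const)
  rintro _ ⟨v, hv, rfl⟩
  have hv' : ‖v - v₀‖ ≤ ρ := by simpa [mem_closedBall, dist_eq_norm] using hv
  have := inner_sub_apply_le_sq_norm_sub_div_four hπF hπ v v₀ hx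
  change ⟪x - π v₀, v - π v⟫ ≤ _
  rw [real_inner_comm]
  nlinarith [pow_le_pow_left₀ (norm_nonneg _) hv' 2]

end InnerProductSpace

section FiniteDimensional

variable {E : Type*} [NormedAddCommGroup E] [NormedSpace ℝ E] [FiniteDimensional ℝ E]
  [MeasurableSpace E] [BorelSpace E] (μ : Measure E) [μ.IsAddHaarMeasure]

theorem LipschitzWith.addHaar_image_eq_zero {K : NNReal} {f : E → E} (hf : LipschitzWith K f)
    {s : Set E} (hs : μ s = 0) : μ (f '' s) = 0 := by
  have hH : μH[Module.finrank ℝ E] s = 0 := Measure.absolutelyContinuous_isAddHaarMeasure _ μ hs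
  refine Measure.absolutelyContinuous_isAddHaarMeasure μ μH[Module.finrank ℝ E] ?_
  exact le_antisymm ((hf.hausdorffMeasure_image_le (by positivity) s).trans (by simp [hH]))
    zero_le

theorem LipschitzWith.addHaar_image_setOf_not_exists_hasFDerivAt_equiv {K : NNReal} {f : E → E}
    (hf : LipschitzWith K f) :
    μ (f '' {x | ¬ ∃ A : E ≃L[ℝ] E, HasFDerivAt f (A : E →L[ℝ] E) x}) = 0 := by
  have hsub : {x | ¬ ∃ A : E ≃L[ℝ] E, HasFDerivAt f (A : E →L[ℝ] E) x} ⊆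
      {x | ¬ DifferentiableAt ℝ f x} ∪ {x | DifferentiableAt ℝ f x ∧ (fderiv ℝ f x).det = 0} := by
    intro x hx
    by_cases hd : DifferentiableAt ℝ f x
    · refine Or.inr ⟨hd, by_contra fun hdet => hx ?_⟩
      exact ⟨(fderiv ℝ f x).toContinuousLinearEquivOfDetNeZero hdet, by simpa using hd.hasFDerivAt⟩
    · exact Or.inl hd
  refine measure_mono_null (image_mono hsub) ?_
  rw [image_union]
  refine measure_union_null (hf.addHaar_image_eq_zero μ (ae_iff.mp hf.ae_differentiableAt)) ?_
  exact addHaar_image_eq_zero_of_det_fderivWithin_eq_zero μ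
    (fun x hx => hx.1.hasFDerivAt.hasFDerivWithinAt) fun x hx => hx.2

end FiniteDimensional

/-- Almost all linear functionals have strong maximizers: for a nonempty compact convex
set `F ⊆ ℝⁿ` there is a set `A ⊆ ℝⁿ` of full Lebesgue measure such that every `c ∈ A`
admits a strong maximizer `x_c ∈ F` with some modulus `δ_c > 0`. -/
theorem ae_strong_maximizer (n : ℕ)
    (F : Set (EuclideanSpace ℝ (Fin n)))
    (hne : F.Nonempty) (hcomp : IsCompact F) (hconv : Convex ℝ F) :
    ∃ A : Set (EuclideanSpace ℝ (Fin n)), volume Aᶜ = 0 ∧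
      ∀ c ∈ A, ∃ xc ∈ F, ∃ δc > (0 : ℝ),
        ∀ x ∈ F, (inner ℝ c x : ℝ) + δc * ‖x - xc‖ ^ 2 ≤ inner ℝ c xc := by
  choose π hπF hπ using exists_norm_eq_iInf_of_complete_convex hne hcomp.isComplete hconv
  replace hπ u := (norm_eq_iInf_iff_real_inner_le_zero hconv (hπF u)).mp (hπ u)
  set Q : EuclideanSpace ℝ (Fin n) → EuclideanSpace ℝ (Fin n) := fun v => v - π v
  have hQ : LipschitzWith (1 + 1) Q :=
    LipschitzWith.id.sub (lipschitzWith_one_of_inner_le_zero hπF hπ)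
  set S := {v | ¬ ∃ A : EuclideanSpace ℝ (Fin n) ≃L[ℝ] EuclideanSpace ℝ (Fin n),
    HasFDerivAt Q (A : EuclideanSpace ℝ (Fin n) →L[ℝ] EuclideanSpace ℝ (Fin n)) v}
  refine ⟨(Q '' S)ᶜ, ?_, fun c hc => ?_⟩
  · rw [compl_compl]
    exact hQ.addHaar_image_setOf_not_exists_hasFDerivAt_equiv volume
  obtain ⟨y, hyF, hymax⟩ := hcomp.exists_isMaxOn hne (innerSL ℝ c).continuous.continuousOn
  have hπy : π (c + y) = y := apply_add_eq_of_inner_sub_le_zero hπF hπ hyF fun x hx => by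
    have hcx : ⟪c, x⟫ ≤ ⟪c, y⟫ := hymax hx
    rwa [inner_sub_right, sub_nonpos]
  have hcy : c + y ∉ S := fun h => hc ⟨c + y, h, by simp [Q, hπy]⟩
  obtain ⟨A, hA⟩ := not_not.mp hcy
  obtain ⟨δ, hδ, hδF⟩ := isStrongMaximizer_of_hasFDerivAt_sub hcomp.isBounded hπF hπ hA
  simp only [hπy, add_sub_cancel_right] at hδF
  exact ⟨y, hyF, δ, hδ, hδF⟩
end

section
/- Let F be a nonempty compact convex subset of ℝⁿ. Then the set of unit vectors c ∈ Sⁿ⁻¹ for which there exist a point x_c ∈ F and a constant δ_c > 0 such that c lies in the relative interior of the normal cone N_F(x_c) and ⟨c, x_c⟩ ≥ ⟨c, x⟩ + δ_c ‖x − x_c‖² for all x ∈ F, is dense in the unit sphere Sⁿ⁻¹. -/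
/-!
For a unit vector `c` and large `t`, a point `x` of `F` farthest from `-t • c` is a strong
maximizer of `⟪x + t • c, ·⟫` with modulus `1/2` (expand `‖y + t • c‖² ≤ ‖x + t • c‖²`), and
`t⁻¹ • (x + t • c) → c`. Pushing a strongly maximized direction slightly towards a point of the
relative interior of the normal cone keeps a positive modulus and lands in that relative interior,
since open segments starting at a relative interior point stay inside. The good directions form
a cone, so normalizing carries their density in `ℝⁿ` over to the sphere.
-/

open Set Filter Topology
open scoped Pointwise

section NormedSpace

variable {E : Type*} [NormedAddCommGroup E] [NormedSpace ℝ E]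

theorem Convex.openSegment_intrinsicInterior_subset_intrinsicInterior {s : Set E}
    (hs : Convex ℝ s) {x y : E} (hx : x ∈ intrinsicInterior ℝ s) (hy : y ∈ s) :
    openSegment ℝ x y ⊆ intrinsicInterior ℝ s := by
  obtain ⟨x', hx', rfl⟩ := hx
  -- Based at `x'`, the affine span becomes the vector space `direction`, where the statement
  -- for interiors of convex sets is available.
  have : Nonempty (affineSpan ℝ s) := ⟨x'⟩
  let e := (AffineIsometryEquiv.vaddConst ℝ x').toHomeomorph
  have ht : Convex ℝ (e ⁻¹' ((↑) ⁻¹' s)) :=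
    hs.affine_preimage ((affineSpan ℝ s).subtype.comp (AffineEquiv.vaddConst ℝ x').toAffineMap)
  have h0 : 0 ∈ interior (e ⁻¹' ((↑) ⁻¹' s)) := by
    rw [← e.preimage_interior]; simpa [e] using hx'
  let v : (affineSpan ℝ s).direction :=
    ⟨y - x', (affineSpan ℝ s).vsub_mem_direction (subset_affineSpan ℝ s hy) x'.2⟩
  have hv : v ∈ e ⁻¹' ((↑) ⁻¹' s) := by simpa [e, v] using hy
  rw [openSegment_eq_image']
  rintro _ ⟨θ, hθ, rfl⟩
  have hθv : θ • v ∈ interior (e ⁻¹' ((↑) ⁻¹' s)) :=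
    ht.openSegment_interior_closure_subset_interior h0 (subset_closure hv)
      ⟨1 - θ, θ, by linarith [hθ.2], hθ.1, by ring, by simp⟩
  rw [← e.preimage_interior] at hθv
  exact ⟨e (θ • v), hθv, by simp [e, v, add_comm]⟩

theorem intrinsicInterior_smul [FiniteDimensional ℝ E] {r : ℝ} (hr : r ≠ 0) (s : Set E) :
    intrinsicInterior ℝ (r • s) = r • intrinsicInterior ℝ s := by
  simpa [← image_smul] using
    (LinearEquiv.smulOfNeZero ℝ E r hr).toAffineEquiv.intrinsicInterior_image s

theorem Dense.sphere_subset_closure_setOf_norm_eq_one {G : Set E} (hG : Dense G)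
    (hsmul : ∀ r : ℝ, 0 < r → ∀ c ∈ G, r • c ∈ G) :
    Metric.sphere (0 : E) 1 ⊆ closure {c | ‖c‖ = 1 ∧ c ∈ G} := by
  intro c hc
  have hc1 : ‖c‖ = 1 := by simpa using hc
  have hc0 : c ≠ 0 := norm_ne_zero_iff.1 (by simp [hc1])
  have hnormalize : Tendsto (fun v : E => ‖v‖⁻¹ • v) (𝓝[G] c) (𝓝 c) := by
    have hcont : ContinuousAt (fun v : E => ‖v‖⁻¹ • v) c :=
      (continuous_norm.continuousAt.inv₀ (norm_ne_zero_iff.2 hc0)).smul continuousAt_id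
    simpa [hc1] using hcont.tendsto.mono_left nhdsWithin_le_nhds
  have := mem_closure_iff_nhdsWithin_neBot.1 (hG.closure_eq ▸ mem_univ c)
  refine mem_closure_of_tendsto hnormalize ?_
  filter_upwards [self_mem_nhdsWithin, nhdsWithin_le_nhds (isOpen_ne.mem_nhds hc0)]
    with v hvG hv0
  exact ⟨by simp [norm_smul, norm_ne_zero_iff.2 hv0], hsmul _ (by positivity) v hvG⟩

end NormedSpace

section InnerProductSpace

open scoped RealInnerProductSpace

variable {E : Type*} [NormedAddCommGroup E] [InnerProductSpace ℝ E]

def normalCone (F : Set E) (x : E) : Set E := {d | ∀ y ∈ F, ⟪d, y - x⟫ ≤ 0}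

variable {F : Set E} {c d x z : E} {δ r : ℝ}

theorem convex_normalCone (F : Set E) (x : E) : Convex ℝ (normalCone F x) := by
  intro d₁ hd₁ d₂ hd₂ a b ha hb _ y hy
  rw [inner_add_left, real_inner_smul_left, real_inner_smul_left]
  nlinarith [hd₁ y hy, hd₂ y hy]

theorem zero_mem_normalCone (F : Set E) (x : E) : (0 : E) ∈ normalCone F x := by
  simp [normalCone]

theorem smul_mem_normalCone (hr : 0 ≤ r) (hd : d ∈ normalCone F x) : r • d ∈ normalCone F x :=
  fun y hy => by
    rw [real_inner_smul_left]
    exact mul_nonpos_of_nonneg_of_nonpos hr (hd y hy)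

theorem smul_normalCone (hr : 0 < r) : r • normalCone F x = normalCone F x := by
  ext d
  rw [mem_smul_set_iff_inv_smul_mem₀ hr.ne']
  refine ⟨fun hd => ?_, smul_mem_normalCone (inv_nonneg.2 hr.le)⟩
  simpa [smul_smul, hr.ne'] using smul_mem_normalCone hr.le hd

theorem smul_mem_intrinsicInterior_normalCone [FiniteDimensional ℝ E] (hr : 0 < r)
    (hc : c ∈ intrinsicInterior ℝ (normalCone F x)) :
    r • c ∈ intrinsicInterior ℝ (normalCone F x) := by
  rw [← smul_normalCone hr, intrinsicInterior_smul hr.ne']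
  exact smul_mem_smul_set hc

def IsStrongMaxOn (c : E) (F : Set E) (x : E) (δ : ℝ) : Prop :=
  ∀ y ∈ F, ⟪c, y⟫ + δ * ‖y - x‖ ^ 2 ≤ ⟪c, x⟫

theorem IsStrongMaxOn.mem_normalCone (h : IsStrongMaxOn c F x δ) (hδ : 0 ≤ δ) :
    c ∈ normalCone F x := fun y hy => by
  rw [inner_sub_right]
  nlinarith [h y hy, sq_nonneg ‖y - x‖]

theorem IsStrongMaxOn.smul (h : IsStrongMaxOn c F x δ) (hr : 0 ≤ r) :
    IsStrongMaxOn (r • c) F x (r * δ) := fun y hy => by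
  rw [real_inner_smul_left, real_inner_smul_left, mul_assoc, ← mul_add]
  exact mul_le_mul_of_nonneg_left (h y hy) hr

theorem IsStrongMaxOn.add_normalCone (h : IsStrongMaxOn c F x δ) (hd : d ∈ normalCone F x) :
    IsStrongMaxOn (c + d) F x δ := fun y hy => by
  have := hd y hy
  rw [inner_sub_right] at this
  rw [inner_add_left, inner_add_left]
  linarith [h y hy]

theorem IsMaxOn.isStrongMaxOn_sub (h : IsMaxOn (fun y => ‖y - z‖) F x) :
    IsStrongMaxOn (x - z) F x (1 / 2) := fun y hy => by
  have hfar : ‖(y - x) + (x - z)‖ ^ 2 ≤ ‖x - z‖ ^ 2 := by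
    rw [sub_add_sub_cancel]
    exact pow_le_pow_left₀ (norm_nonneg _) (h hy) 2
  rw [norm_add_sq_real, real_inner_comm, inner_sub_right] at hfar
  linarith

def strongMaxDirections (F : Set E) : Set E :=
  {c | ∃ x ∈ F, ∃ δ > (0 : ℝ), IsStrongMaxOn c F x δ}

def strictlyComplementaryDirections (F : Set E) : Set E :=
  {c | ∃ x ∈ F, ∃ δ > (0 : ℝ),
    c ∈ intrinsicInterior ℝ (normalCone F x) ∧ IsStrongMaxOn c F x δ}

theorem dense_strongMaxDirections (hne : F.Nonempty) (hF : IsCompact F) :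
    Dense (strongMaxDirections F) := by
  obtain ⟨M, hM⟩ := hF.isBounded.exists_norm_le
  refine Metric.dense_iff.2 fun c ε hε => ?_
  set t : ℝ := (|M| + 1) / ε
  have ht : 0 < t := by positivity
  obtain ⟨x, hxF, hx⟩ := hF.exists_isMaxOn hne
    (continuous_sub_right (-(t • c))).norm.continuousOn
  refine ⟨t⁻¹ • (x - -(t • c)), ?_, x, hxF, t⁻¹ * (1 / 2), by positivity,
    hx.isStrongMaxOn_sub.smul (inv_nonneg.2 ht.le)⟩
  have hshift : t⁻¹ • (x - -(t • c)) - c = t⁻¹ • x := by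
    rw [sub_neg_eq_add, smul_add, smul_smul, inv_mul_cancel₀ ht.ne', one_smul, add_sub_cancel_right]
  rw [Metric.mem_ball, dist_eq_norm, hshift, norm_smul, Real.norm_of_nonneg (inv_nonneg.2 ht.le),
    inv_mul_lt_iff₀ ht]
  calc ‖x‖ ≤ |M| := (hM x hxF).trans (le_abs_self M)
    _ < t * ε := by rw [div_mul_cancel₀ _ hε.ne']; linarith

variable [FiniteDimensional ℝ E]

theorem strongMaxDirections_subset_closure (F : Set E) :
    strongMaxDirections F ⊆ closure (strictlyComplementaryDirections F) := by
  rintro c ⟨x, hxF, δ, hδ, hc⟩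
  obtain ⟨d, hd⟩ := Nonempty.intrinsicInterior (convex_normalCone F x)
    ⟨0, zero_mem_normalCone F x⟩
  have hseg : openSegment ℝ d c ⊆ strictlyComplementaryDirections F := by
    rintro _ ⟨a, b, ha, hb, hab, rfl⟩
    refine ⟨x, hxF, b * δ, mul_pos hb hδ,
      (convex_normalCone F x).openSegment_intrinsicInterior_subset_intrinsicInterior hd
        (hc.mem_normalCone hδ.le) ⟨a, b, ha, hb, hab, rfl⟩, ?_⟩
    rw [add_comm]
    exact (hc.smul hb.le).add_normalCone (smul_mem_normalCone ha.le (intrinsicInterior_subset hd))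
  exact closure_mono hseg (segment_subset_closure_openSegment (right_mem_segment ℝ d c))

theorem smul_mem_strictlyComplementaryDirections (hr : 0 < r)
    (hc : c ∈ strictlyComplementaryDirections F) : r • c ∈ strictlyComplementaryDirections F := by
  obtain ⟨x, hxF, δ, hδ, hri, hmax⟩ := hc
  exact ⟨x, hxF, r * δ, mul_pos hr hδ, smul_mem_intrinsicInterior_normalCone hr hri,
    hmax.smul hr.le⟩

end InnerProductSpace

theorem dense_strong_maximizer_ri_normal_cone_general (n : ℕ)
    (F : Set (EuclideanSpace ℝ (Fin n)))
    (hne : F.Nonempty) (hcomp : IsCompact F) :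
    Metric.sphere (0 : EuclideanSpace ℝ (Fin n)) 1 ⊆
      closure {c : EuclideanSpace ℝ (Fin n) | ‖c‖ = 1 ∧
        ∃ xc ∈ F, ∃ δc > (0 : ℝ),
          c ∈ intrinsicInterior ℝ
              {d : EuclideanSpace ℝ (Fin n) | ∀ x' ∈ F, (inner ℝ d (x' - xc) : ℝ) ≤ 0} ∧
          ∀ x ∈ F, (inner ℝ c x : ℝ) + δc * ‖x - xc‖ ^ 2 ≤ inner ℝ c xc} := by
  have hdense : Dense (strictlyComplementaryDirections F) :=
    dense_closure.1 <| (dense_strongMaxDirections hne hcomp).mono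
      (strongMaxDirections_subset_closure F)
  exact hdense.sphere_subset_closure_setOf_norm_eq_one
    fun _ hr _ => smul_mem_strictlyComplementaryDirections hr

/-- Density of functionals with strong maximizer and strict complementarity:
for a nonempty compact convex set `F ⊆ ℝⁿ`, the set of unit vectors `c` admitting a
strong maximizer `x_c ∈ F` (with some modulus `δ_c > 0`) such that moreover `c` lies in
the relative (intrinsic) interior of the normal cone `N_F(x_c)`, is dense in the unit
sphere `Sⁿ⁻¹`. -/
theorem dense_strong_maximizer_ri_normal_cone (n : ℕ)
    (F : Set (EuclideanSpace ℝ (Fin n)))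
    (hne : F.Nonempty) (hcomp : IsCompact F) (hconv : Convex ℝ F) :
    Metric.sphere (0 : EuclideanSpace ℝ (Fin n)) 1 ⊆
      closure {c : EuclideanSpace ℝ (Fin n) | ‖c‖ = 1 ∧
        ∃ xc ∈ F, ∃ δc > (0 : ℝ),
          c ∈ intrinsicInterior ℝ
              {d : EuclideanSpace ℝ (Fin n) | ∀ x' ∈ F, (inner ℝ d (x' - xc) : ℝ) ≤ 0} ∧
          ∀ x ∈ F, (inner ℝ c x : ℝ) + δc * ‖x - xc‖ ^ 2 ≤ inner ℝ c xc} :=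
  dense_strong_maximizer_ri_normal_cone_general n F hne hcomp
end

section
/- Let F be a nonempty closed convex subset of ℝⁿ, let c, c′ ∈ ℝⁿ, x ∈ F, δ > 0 and η > 0. Suppose x is a strong maximizer of ⟨c,·⟩ over F with modulus δ, i.e. ⟨c, x⟩ ≥ ⟨c, x′⟩ + δ‖x′ − x‖² for all x′ ∈ F, and suppose c′ − η c ∈ N_F(x). Then x is a strong maximizer of ⟨c′,·⟩ over F with modulus η δ, i.e. ⟨c′, x⟩ ≥ ⟨c′, x′⟩ + η δ ‖x′ − x‖² for all x′ ∈ F. -/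
theorem strong_maximizer_normal_perturbation_general (n : ℕ)
    (F : Set (EuclideanSpace ℝ (Fin n)))
    (c c' : EuclideanSpace ℝ (Fin n)) (x : EuclideanSpace ℝ (Fin n))
    (δ η : ℝ) (hη : 0 < η)
    (hstrong : ∀ x' ∈ F, (inner ℝ c x' : ℝ) + δ * ‖x' - x‖ ^ 2 ≤ inner ℝ c x)
    (hnc : ∀ x' ∈ F, (inner ℝ (c' - η • c) (x' - x) : ℝ) ≤ 0) :
    ∀ x' ∈ F, (inner ℝ c' x' : ℝ) + η * δ * ‖x' - x‖ ^ 2 ≤ inner ℝ c' x := by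
  intro x' hx'
  have hsplit : (inner ℝ c' (x' - x) : ℝ) =
      inner ℝ (c' - η • c) (x' - x) + η * inner ℝ c (x' - x) := by
    rw [inner_sub_left, real_inner_smul_left]
    ring
  have hgap : (inner ℝ c (x' - x) : ℝ) ≤ -(δ * ‖x' - x‖ ^ 2) := by
    rw [inner_sub_right]
    linarith [hstrong x' hx']
  have hdescent : (inner ℝ c' (x' - x) : ℝ) ≤ -(η * δ * ‖x' - x‖ ^ 2) := by
    rw [hsplit, mul_assoc, ← mul_neg]
    linarith [hnc x' hx', mul_le_mul_of_nonneg_left hgap hη.le]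
  rw [inner_sub_right] at hdescent
  linarith

/-- If `x` is a strong maximizer of `⟪c,·⟫` over the nonempty closed convex set `F`
with modulus `δ`, and `c′ − η c` lies in the normal cone `N_F(x)`, then `x` is a
strong maximizer of `⟪c′,·⟫` over `F` with modulus `η δ`. -/
theorem strong_maximizer_normal_perturbation (n : ℕ)
    (F : Set (EuclideanSpace ℝ (Fin n)))
    (hne : F.Nonempty) (hcl : IsClosed F) (hconv : Convex ℝ F)
    (c c' : EuclideanSpace ℝ (Fin n)) (x : EuclideanSpace ℝ (Fin n)) (hx : x ∈ F)
    (δ η : ℝ) (hδ : 0 < δ) (hη : 0 < η)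
    (hstrong : ∀ x' ∈ F, (inner ℝ c x' : ℝ) + δ * ‖x' - x‖ ^ 2 ≤ inner ℝ c x)
    (hnc : ∀ x' ∈ F, (inner ℝ (c' - η • c) (x' - x) : ℝ) ≤ 0) :
    ∀ x' ∈ F, (inner ℝ c' x' : ℝ) + η * δ * ‖x' - x‖ ^ 2 ≤ inner ℝ c' x :=
  strong_maximizer_normal_perturbation_general n F c c' x δ η hη hstrong hnc
end

section
/- Let F = {(u,v,w) ∈ ℝ³ : w ≥ u² + |v|} and for t ∈ (−1,1) let x_t = (t, 0, t²) (so x_t lies on the manifold M = {(t,0,t²) : t ∈ (−1,1)} ⊂ F). Then the normal cone mapping restricted to M is inner semicontinuous at the origin: for every ȳ ∈ N_F(0,0,0) and every sequence t_k → 0 in (−1,1), there exist vectors y_k ∈ N_F(x_{t_k}) with y_k → ȳ. -/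
/-!
The normal cone of `F = {w ≥ u² + |v|}` at the origin is `{(0, b, c) : |b| ≤ -c}`: testing against
the points `(0, ±1, 1)` gives `|b| ≤ -c`, and testing against `(u, 0, u²)` shows that `u ↦ a u + c u²`
is maximal at `0`, forcing `a = 0`. Conversely, for `|b| ≤ -c` the vector `(-2ct, b, c)` is normal
to `F` at `(t, 0, t²)`, since its inner product with `q - (t, 0, t²)` is at most `c (q₀ - t)² ≤ 0`.
These vectors depend continuously on `t` and equal `(0, b, c)` at `t = 0`.
-/

open Filter Topology

/-- The point `(t, 0, t²)` of `ℝ³`. -/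
noncomputable def ridgePoint (t : ℝ) : EuclideanSpace ℝ (Fin 3) := WithLp.toLp 2 ![t, 0, t ^ 2]

local notation "ℝ³" => EuclideanSpace ℝ (Fin 3)

def ridgeSet : Set ℝ³ := {p | p 0 ^ 2 + |p 1| ≤ p 2}

noncomputable def ridgeNormal (b c t : ℝ) : ℝ³ := !₂[-2 * c * t, b, c]

lemma inner_eq_fin_three (x y : ℝ³) : inner ℝ x y = x 0 * y 0 + x 1 * y 1 + x 2 * y 2 := by
  simp [PiLp.inner_apply, Fin.sum_univ_three, mul_comm]

lemma eq_zero_of_forall_mul_add_mul_sq_nonpos {a c : ℝ} (h : ∀ u : ℝ, a * u + c * u ^ 2 ≤ 0) :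
    a = 0 := by
  -- at `u = a / (1 + c²)` the left side is `u² (1 + c + c²)`, and `1 + c + c² > 0`
  set u := a / (1 + c ^ 2) with hu
  have ha : a = (1 + c ^ 2) * u := by rw [hu]; field_simp
  have hu0 : u = 0 := by nlinarith [h u, sq_nonneg u, sq_nonneg (c + 1 / 2)]
  rw [ha, hu0, mul_zero]

lemma normal_ridgeSet_origin {y : ℝ³} (hy : ∀ q ∈ ridgeSet, inner ℝ y q ≤ 0) :
    y 0 = 0 ∧ |y 1| ≤ -y 2 := by
  have hyq (u v : ℝ) : y 0 * u + y 1 * v + y 2 * (u ^ 2 + |v|) ≤ 0 := by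
    simpa [inner_eq_fin_three, ridgeSet] using hy !₂[u, v, u ^ 2 + |v|] (by simp [ridgeSet])
  refine ⟨eq_zero_of_forall_mul_add_mul_sq_nonpos fun u => by simpa using hyq u 0, ?_⟩
  have hpos := hyq 0 1
  have hneg := hyq 0 (-1)
  norm_num at hpos hneg
  exact abs_le.2 ⟨by linarith, by linarith⟩

lemma ridgeNormal_mem_normal {b c : ℝ} (hbc : |b| ≤ -c) (t : ℝ) :
    ∀ q ∈ ridgeSet, inner ℝ (ridgeNormal b c t) (q - ridgePoint t) ≤ 0 := by
  intro q (hq : q 0 ^ 2 + |q 1| ≤ q 2)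
  have hc : c ≤ 0 := (abs_nonneg b).trans hbc |> neg_nonneg.1
  have hbq : b * q 1 ≤ -c * |q 1| :=
    (le_abs_self _).trans ((abs_mul b (q 1)).trans_le (mul_le_mul_of_nonneg_right hbc (abs_nonneg _)))
  have hcq : c * (q 2 - |q 1|) ≤ c * q 0 ^ 2 := mul_le_mul_of_nonpos_left (by linarith) hc
  calc inner ℝ (ridgeNormal b c t) (q - ridgePoint t)
      = -2 * c * t * (q 0 - t) + b * q 1 + c * (q 2 - t ^ 2) := by
        simp [inner_eq_fin_three, ridgeNormal, ridgePoint]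
    _ ≤ c * (q 0 - t) ^ 2 := by nlinarith
    _ ≤ 0 := mul_nonpos_of_nonpos_of_nonneg hc (sq_nonneg _)

lemma continuous_ridgeNormal (b c : ℝ) : Continuous (ridgeNormal b c) := by
  unfold ridgeNormal
  fun_prop

lemma ridgeNormal_zero {y : ℝ³} (hy : y 0 = 0) : ridgeNormal (y 1) (y 2) 0 = y := by
  ext i
  fin_cases i <;> simp [ridgeNormal, hy]

theorem normal_cone_inner_semicontinuous_ridge_general
    (ybar : EuclideanSpace ℝ (Fin 3))
    (hybar : ∀ q ∈ {p : EuclideanSpace ℝ (Fin 3) | p 0 ^ 2 + |p 1| ≤ p 2},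
      (inner ℝ ybar (q - (0 : EuclideanSpace ℝ (Fin 3))) : ℝ) ≤ 0)
    (t : ℕ → ℝ)
    (htlim : Tendsto t atTop (𝓝 0)) :
    ∃ y : ℕ → EuclideanSpace ℝ (Fin 3),
      Tendsto y atTop (𝓝 ybar) ∧
      ∀ k, ∀ q ∈ {p : EuclideanSpace ℝ (Fin 3) | p 0 ^ 2 + |p 1| ≤ p 2},
        (inner ℝ (y k) (q - ridgePoint (t k)) : ℝ) ≤ 0 := by
  obtain ⟨hybar0, hbc⟩ := normal_ridgeSet_origin fun q hq => by simpa using hybar q hq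
  refine ⟨fun k => ridgeNormal (ybar 1) (ybar 2) (t k), ?_, fun k => ridgeNormal_mem_normal hbc (t k)⟩
  simpa only [ridgeNormal_zero hybar0, Function.comp_def] using
    ((continuous_ridgeNormal (ybar 1) (ybar 2)).tendsto 0).comp htlim

/-- For `F = {(u,v,w) : w ≥ u² + |v|} ⊆ ℝ³` and the manifold
`M = {(t,0,t²) : t ∈ (−1,1)} ⊆ F`, the normal cone mapping restricted to `M` is inner
semicontinuous at the origin: for every `ȳ ∈ N_F(0)` and every sequence `t_k → 0` in
`(−1,1)` there are `y_k ∈ N_F(t_k, 0, t_k²)` with `y_k → ȳ`. -/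
theorem normal_cone_inner_semicontinuous_ridge
    (ybar : EuclideanSpace ℝ (Fin 3))
    (hybar : ∀ q ∈ {p : EuclideanSpace ℝ (Fin 3) | p 0 ^ 2 + |p 1| ≤ p 2},
      (inner ℝ ybar (q - (0 : EuclideanSpace ℝ (Fin 3))) : ℝ) ≤ 0)
    (t : ℕ → ℝ) (ht : ∀ k, t k ∈ Set.Ioo (-1 : ℝ) 1)
    (htlim : Tendsto t atTop (𝓝 0)) :
    ∃ y : ℕ → EuclideanSpace ℝ (Fin 3),
      Tendsto y atTop (𝓝 ybar) ∧
      ∀ k, ∀ q ∈ {p : EuclideanSpace ℝ (Fin 3) | p 0 ^ 2 + |p 1| ≤ p 2},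
        (inner ℝ (y k) (q - ridgePoint (t k)) : ℝ) ≤ 0 :=
  normal_cone_inner_semicontinuous_ridge_general ybar hybar t htlim
end
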